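/- arXiv:2202.07514 — 2 statements merged into one kernel-verified Lean document; each statement's English description precedes it below -/
import Mathlib

section
/- Under these hypotheses (maximal quantum violation of the inequality I₃), the subspace V = span{ψ, A₁ψ, A₂ψ, A₃ψ, B₁ψ, B₂ψ, B₃ψ, A₁B₁ψ} has dimension 8 and there exists a linear isometric equivalence e : V ≃ ℂ² ⊗ ℂ² ⊗ ℂ² such that e(Aᵢ v) = Xᵢ e(v) and e(Bᵢ v) = Zᵢ e(v) for every v ∈ V and i ∈ {1,2,3}, and moreover e(ψ) = |G'⟩, where |G'⟩ = (1/√8)(|000⟩ + |100⟩ + |010⟩ − |110⟩ + |001⟩ − |101⟩ − |011⟩ − |111⟩) is the three-qubit complete-graph state (|abc⟩ denotes |a⟩⊗|b⟩⊗|c⟩ in the standard basis of ℂ² ⊗ ℂ² ⊗ ℂ²). -/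
/-- The Pauli matrix `X = !![0, 1; 1, 0]`. -/
noncomputable def PauliX : Matrix (Fin 2) (Fin 2) ℂ := !![0, 1; 1, 0]

/-- The Pauli matrix `Z = !![1, 0; 0, -1]`. -/
noncomputable def PauliZ : Matrix (Fin 2) (Fin 2) ℂ := !![1, 0; 0, -1]

/-- The operator on `(ℂ²)^{⊗n}` (realised as `EuclideanSpace ℂ (Fin n → Fin 2)`)
acting as the one-qubit matrix `M` on the `i`-th tensor factor and as the identity
on all other factors. -/
noncomputable def tensorFactor (n : ℕ) (M : Matrix (Fin 2) (Fin 2) ℂ) (i : Fin n) :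
    Matrix (Fin n → Fin 2) (Fin n → Fin 2) ℂ :=
  Matrix.of fun f g =>
    M (f i) (g i) * ∏ j ∈ Finset.univ.erase i, (if f j = g j then (1 : ℂ) else 0)

/-- The three-qubit complete-graph state
`|G'⟩ = (1/√8)(|000⟩+|100⟩+|010⟩−|110⟩+|001⟩−|101⟩−|011⟩−|111⟩)`,
where `|abc⟩` is the standard basis vector of `ℂ² ⊗ ℂ² ⊗ ℂ²` indexed by
`![a,b,c] : Fin 3 → Fin 2`. -/
noncomputable def graphState3 : EuclideanSpace ℂ (Fin 3 → Fin 2) :=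
  ((Real.sqrt 8 : ℂ))⁻¹ •
    (EuclideanSpace.single ![0, 0, 0] (1 : ℂ) + EuclideanSpace.single ![1, 0, 0] 1
      + EuclideanSpace.single ![0, 1, 0] 1 - EuclideanSpace.single ![1, 1, 0] 1
      + EuclideanSpace.single ![0, 0, 1] 1 - EuclideanSpace.single ![1, 0, 1] 1
      - EuclideanSpace.single ![0, 1, 1] 1 - EuclideanSpace.single ![1, 1, 1] 1)

/-!
For `s ∈ {0,1}³` write `Bˢ = B₀^{s₀} B₁^{s₁} B₂^{s₂}`. The maximal-violation relations give
`Aᵢ ψ = B^{1 + eᵢ} ψ` and `Aᵢ Bᵢ ψ = -B^{(1,1,1)} ψ`, hence `Bᵢ Bˢ ψ = B^{s + eᵢ} ψ` and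
`Aᵢ Bˢ ψ = (-1)^{sᵢ} B^{s + 1 + eᵢ} ψ`. The stabilizer `A_k ∏_{j ≠ k} B_j` is an isometry acting on
`Bˢ ψ` by `(-1)^{s_k}`, so the eight vectors `Bˢ ψ` are orthonormal, and `V` is their span.
The Pauli operators `Xᵢ, Zᵢ` with the state `|G'⟩` satisfy the same relations, so the isometry
sending `Bˢ ψ` to `Zˢ |G'⟩` intertwines `Aᵢ, Bᵢ` with `Xᵢ, Zᵢ`.
-/

open scoped InnerProductSpace ComplexConjugate

section Monoid

variable {M : Type*} [Monoid M]

lemma pow_val_add_of_mul_self {T : M} (hT : T * T = 1) (a b : Fin 2) :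
    T ^ ((a + b : Fin 2) : ℕ) = T ^ (a : ℕ) * T ^ (b : ℕ) := by
  fin_cases a <;> fin_cases b <;> simp [hT]

def multiPow (B : Fin 3 → M) (s : Fin 3 → Fin 2) : M :=
  B 0 ^ (s 0 : ℕ) * B 1 ^ (s 1 : ℕ) * B 2 ^ (s 2 : ℕ)

variable {B : Fin 3 → M}

@[simp]
lemma multiPow_zero : multiPow B 0 = 1 := by
  simp [multiPow]

@[simp]
lemma multiPow_single (i : Fin 3) : multiPow B (Pi.single i 1) = B i := by
  fin_cases i <;> simp [multiPow]

lemma multiPow_add (hsq : ∀ i, B i * B i = 1) (hc : ∀ i j, Commute (B i) (B j))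
    (s r : Fin 3 → Fin 2) : multiPow B (s + r) = multiPow B s * multiPow B r := by
  have hc' (i j : Fin 3) (m n : ℕ) : Commute (B i ^ m) (B j ^ n) := (hc i j).pow_pow m n
  simp only [multiPow, Pi.add_apply, pow_val_add_of_mul_self (hsq _), mul_assoc]
  rw [(hc' 0 1 _ _).left_comm, (hc' 1 2 _ _).left_comm, (hc' 0 2 _ _).left_comm]

lemma commute_multiPow {T : M} {i : Fin 3} (hT : ∀ j, j ≠ i → Commute T (B j))
    {s : Fin 3 → Fin 2} (hs : s i = 0) : Commute T (multiPow B s) := by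
  have h (j : Fin 3) : Commute T (B j ^ (s j : ℕ)) := by
    by_cases hj : j = i
    · subst hj; simp [hs]
    · exact (hT j hj).pow_right _
  exact ((h 0).mul_right (h 1)).mul_right (h 2)

end Monoid

section FinTwo

lemma fin_two_add_self (a : Fin 2) : a + a = 0 := by
  fin_cases a <;> rfl

lemma pi_fin_two_add_self {ι : Type*} (x : ι → Fin 2) : x + x = 0 :=
  funext fun _ => fin_two_add_self _

lemma pi_fin_two_add_add_self {ι : Type*} (s x : ι → Fin 2) : s + x + x = s := by
  rw [add_assoc, pi_fin_two_add_self, add_zero]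

lemma single_add_one_apply_self (k : Fin 3) : (Pi.single k 1 + 1 : Fin 3 → Fin 2) k = 0 := by
  revert k; decide

lemma single_add_one_add_single {i j k : Fin 3} (hij : i ≠ j) (hik : i ≠ k) (hjk : j ≠ k) :
    (Pi.single j 1 + 1 + Pi.single k 1 : Fin 3 → Fin 2) = Pi.single i 1 := by
  revert i j k; decide

lemma neg_one_pow_val_mul_ne_one {a b : Fin 2} (hab : a ≠ b) :
    conj ((-1 : ℂ) ^ (a : ℕ)) * (-1) ^ (b : ℕ) ≠ 1 := by
  fin_cases a <;> fin_cases b <;> simp at hab ⊢ <;> norm_num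

end FinTwo

section InnerPreserving

variable (H : Type*) [NormedAddCommGroup H] [InnerProductSpace ℂ H]

def innerPreserving : Submonoid (H →L[ℂ] H) where
  carrier := {T | ∀ x y, ⟪T x, T y⟫_ℂ = ⟪x, y⟫_ℂ}
  mul_mem' hS hT x y := (hS _ _).trans (hT x y)
  one_mem' _ _ := rfl

variable {H}

lemma inner_eq_zero_of_apply_eq_smul {T : H →L[ℂ] H} (hT : T ∈ innerPreserving H) {x y : H}
    {a b : ℂ} (hx : T x = a • x) (hy : T y = b • y) (hab : conj a * b ≠ 1) : ⟪x, y⟫_ℂ = 0 := by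
  by_contra hxy
  have h := hT x y
  rw [hx, hy, inner_smul_left, inner_smul_right, ← mul_assoc] at h
  exact hab (mul_right_cancel₀ hxy (h.trans (one_mul _).symm))

end InnerPreserving

section SpanEquiv

open Submodule Set

variable {ι E E' : Type*} [NormedAddCommGroup E] [InnerProductSpace ℂ E]
  [NormedAddCommGroup E'] [InnerProductSpace ℂ E'] {u : ι → E} {u' : ι → E'}

noncomputable def Orthonormal.spanBasis [Fintype ι] (hu : Orthonormal ℂ u) :
    OrthonormalBasis ι ℂ (span ℂ (range u)) :=
  OrthonormalBasis.mk (orthonormal_span hu) ((span_range_subtype_eq_top_iff _ _).2 rfl).ge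

@[simp]
lemma Orthonormal.coe_spanBasis [Fintype ι] (hu : Orthonormal ℂ u) (s : ι) :
    (hu.spanBasis s : E) = u s := by
  simp [Orthonormal.spanBasis]

noncomputable def Orthonormal.spanEquiv [Fintype ι] (hu : Orthonormal ℂ u)
    (hu' : Orthonormal ℂ u') : span ℂ (range u) ≃ₗᵢ[ℂ] span ℂ (range u') :=
  hu.spanBasis.equiv hu'.spanBasis (Equiv.refl ι)

lemma Orthonormal.spanEquiv_apply [Fintype ι] (hu : Orthonormal ℂ u) (hu' : Orthonormal ℂ u')
    {s : ι} {x : E} (hx : x ∈ span ℂ (range u)) (hxs : x = u s) :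
    (hu.spanEquiv hu' ⟨x, hx⟩ : E') = u' s := by
  have : (⟨x, hx⟩ : span ℂ (range u)) = hu.spanBasis s := Subtype.ext (by simp [hxs])
  simp [this, Orthonormal.spanEquiv]

lemma mapsTo_span_of_apply_eq_smul {T : E →L[ℂ] E} {c : ι → ℂ} {π : ι → ι}
    (hT : ∀ s, T (u s) = c s • u (π s)) : ∀ x ∈ span ℂ (range u), T x ∈ span ℂ (range u) := by
  have : span ℂ (range u) ≤ (span ℂ (range u)).comap (T : E →ₗ[ℂ] E) :=
    span_le.2 <| range_subset_iff.2 fun s => by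
      simpa [hT] using smul_mem _ (c s) (subset_span (mem_range_self (π s)))
  exact fun x hx => this hx

lemma Orthonormal.spanEquiv_apply_map [Fintype ι] (hu : Orthonormal ℂ u)
    (hu' : Orthonormal ℂ u') {T : E →L[ℂ] E} {T' : E' →L[ℂ] E'} {c : ι → ℂ} {π : ι → ι}
    (hT : ∀ s, T (u s) = c s • u (π s)) (hT' : ∀ s, T' (u' s) = c s • u' (π s))
    (v : E) (hv : v ∈ span ℂ (range u)) (hTv : T v ∈ span ℂ (range u)) :
    (hu.spanEquiv hu' ⟨T v, hTv⟩ : E') = T' (hu.spanEquiv hu' ⟨v, hv⟩) := by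
  let R := (T : E →ₗ[ℂ] E).restrict (mapsTo_span_of_apply_eq_smul hT)
  let R' := (T' : E' →ₗ[ℂ] E').restrict (mapsTo_span_of_apply_eq_smul hT')
  have hR (s : ι) : R (hu.spanBasis s) = c s • hu.spanBasis (π s) :=
    Subtype.ext (by simp [R, hT])
  have hR' (s : ι) : R' (hu'.spanBasis s) = c s • hu'.spanBasis (π s) :=
    Subtype.ext (by simp [R', hT'])
  have key : (hu.spanEquiv hu').toLinearMap ∘ₗ R = R' ∘ₗ (hu.spanEquiv hu').toLinearMap :=
    hu.spanBasis.toBasis.ext fun s => by simp [hR, hR', Orthonormal.spanEquiv]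
  exact congrArg Subtype.val (LinearMap.congr_fun key ⟨v, hv⟩)

end SpanEquiv

section MaxViolation

variable {H : Type*} [NormedAddCommGroup H] [InnerProductSpace ℂ H]

structure IsI3MaxViolation (A B : Fin 3 → H →L[ℂ] H) (ψ : H) : Prop where
  inner_A_left : ∀ i (x y : H), ⟪A i x, y⟫_ℂ = ⟪x, A i y⟫_ℂ
  inner_B_left : ∀ i (x y : H), ⟪B i x, y⟫_ℂ = ⟪x, B i y⟫_ℂ
  A_involutive : ∀ i, Function.Involutive (A i)
  B_involutive : ∀ i, Function.Involutive (B i)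
  A_comm : ∀ i j, i ≠ j → ∀ x, A i (A j x) = A j (A i x)
  A_B_comm : ∀ i j, i ≠ j → ∀ x, A i (B j x) = B j (A i x)
  B_comm : ∀ i j, i ≠ j → ∀ x, B i (B j x) = B j (B i x)
  norm_eq_one : ‖ψ‖ = 1
  A₀B₁B₂ : A 0 (B 1 (B 2 ψ)) = ψ
  B₀A₁B₂ : B 0 (A 1 (B 2 ψ)) = ψ
  B₀B₁A₂ : B 0 (B 1 (A 2 ψ)) = ψ
  A₀A₁A₂ : A 0 (A 1 (A 2 ψ)) = -ψ

def stabilizerOp (A B : Fin 3 → H →L[ℂ] H) (k : Fin 3) : H →L[ℂ] H :=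
  A k * multiPow B (Pi.single k 1 + 1)

namespace IsI3MaxViolation

variable {A B : Fin 3 → H →L[ℂ] H} {ψ : H}

lemma B_mul_self (h : IsI3MaxViolation A B ψ) (i : Fin 3) : B i * B i = 1 :=
  ContinuousLinearMap.ext (h.B_involutive i)

lemma commute_B (h : IsI3MaxViolation A B ψ) (i j : Fin 3) : Commute (B i) (B j) := by
  by_cases hij : i = j
  · rw [hij]
  · exact ContinuousLinearMap.ext (h.B_comm i j hij)

lemma commute_A_B (h : IsI3MaxViolation A B ψ) {i j : Fin 3} (hij : i ≠ j) :
    Commute (A i) (B j) :=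
  ContinuousLinearMap.ext (h.A_B_comm i j hij)

lemma A_mem_innerPreserving (h : IsI3MaxViolation A B ψ) (i : Fin 3) :
    A i ∈ innerPreserving H := fun x y => by
  rw [h.inner_A_left, h.A_involutive i]

lemma multiPow_mem_innerPreserving (h : IsI3MaxViolation A B ψ) (s : Fin 3 → Fin 2) :
    multiPow B s ∈ innerPreserving H := by
  have hB (i : Fin 3) : B i ∈ innerPreserving H := fun x y => by
    rw [h.inner_B_left, h.B_involutive i]
  exact mul_mem (mul_mem (pow_mem (hB 0) _) (pow_mem (hB 1) _)) (pow_mem (hB 2) _)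

lemma multiPow_apply_multiPow (h : IsI3MaxViolation A B ψ) (s r : Fin 3 → Fin 2) (x : H) :
    multiPow B s (multiPow B r x) = multiPow B (s + r) x := by
  rw [multiPow_add h.B_mul_self h.commute_B]; rfl

lemma B_multiPow (h : IsI3MaxViolation A B ψ) (i : Fin 3) (s : Fin 3 → Fin 2) (x : H) :
    B i (multiPow B s x) = multiPow B (s + Pi.single i 1) x := by
  rw [add_comm, ← h.multiPow_apply_multiPow, multiPow_single]

lemma A_state (h : IsI3MaxViolation A B ψ) (i : Fin 3) :
    A i ψ = multiPow B (Pi.single i 1 + 1) ψ := by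
  fin_cases i
  · simpa [multiPow] using ((h.A_involutive 0).eq_iff.1 h.A₀B₁B₂).symm
  · have h1 := (h.B_involutive 0).eq_iff.1 h.B₀A₁B₂
    rw [h.A_B_comm 1 2 (by decide)] at h1
    simpa [multiPow, h.B_comm 0 2 (by decide)] using (h.B_involutive 2).eq_iff.1 h1
  · have h2 := (h.B_involutive 0).eq_iff.1 h.B₀B₁A₂
    simpa [multiPow, h.B_comm 0 1 (by decide)] using (h.B_involutive 1).eq_iff.1 h2

lemma A_multiPow_comm (h : IsI3MaxViolation A B ψ) {i : Fin 3} {r : Fin 3 → Fin 2}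
    (hr : r i = 0) (x : H) : A i (multiPow B r x) = multiPow B r (A i x) :=
  DFunLike.congr_fun (commute_multiPow (fun _ hj => h.commute_A_B hj.symm) hr).eq x

lemma A_B_state (h : IsI3MaxViolation A B ψ) (i : Fin 3) : A i (B i ψ) = -multiPow B 1 ψ := by
  have h₁₂ : A 1 (A 2 ψ) = -A 0 ψ := by
    rw [← map_neg, ← (h.A_involutive 0).eq_iff, h.A₀A₁A₂]
  have h₀₂ : A 0 (A 2 ψ) = -A 1 ψ := by
    rw [← map_neg, ← (h.A_involutive 1).eq_iff, h.A_comm 1 0 (by decide), h.A₀A₁A₂]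
  have h₂₁ : A 2 (A 1 ψ) = -A 0 ψ := by rw [h.A_comm 2 1 (by decide), h₁₂]
  obtain ⟨j, k, hij, hik, hjk, hA⟩ : ∃ j k, i ≠ j ∧ i ≠ k ∧ j ≠ k ∧ A i (A j ψ) = -A k ψ := by
    fin_cases i
    · exact ⟨2, 1, by decide, by decide, by decide, h₀₂⟩
    · exact ⟨2, 0, by decide, by decide, by decide, h₁₂⟩
    · exact ⟨1, 0, by decide, by decide, by decide, h₂₁⟩
  calc A i (B i ψ) = A i (B k (A j ψ)) := by
        rw [h.A_state j, h.B_multiPow, single_add_one_add_single hij hik hjk, multiPow_single]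
    _ = B k (A i (A j ψ)) := h.A_B_comm i k hik _
    _ = -multiPow B 1 ψ := by
        rw [hA, map_neg, h.A_state k, h.B_multiPow, add_right_comm, pi_fin_two_add_self,
          zero_add]

lemma A_multiPow (h : IsI3MaxViolation A B ψ) (i : Fin 3) (s : Fin 3 → Fin 2) :
    A i (multiPow B s ψ) = (-1 : ℂ) ^ (s i : ℕ) • multiPow B (s + (Pi.single i 1 + 1)) ψ := by
  rcases (by decide : ∀ a : Fin 2, a = 0 ∨ a = 1) (s i) with hs | hs
  · rw [h.A_multiPow_comm hs, h.A_state, h.multiPow_apply_multiPow, hs, add_comm]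
    simp
  · have hr : (s + Pi.single i 1 : Fin 3 → Fin 2) i = 0 := by simp [hs]
    calc A i (multiPow B s ψ) = A i (multiPow B (s + Pi.single i 1) (B i ψ)) := by
          rw [← multiPow_single (B := B) i, h.multiPow_apply_multiPow, pi_fin_two_add_add_self]
      _ = multiPow B (s + Pi.single i 1) (A i (B i ψ)) := h.A_multiPow_comm hr _
      _ = _ := by
          rw [h.A_B_state, map_neg, h.multiPow_apply_multiPow, hs, ← add_assoc]
          simp

lemma stabilizerOp_multiPow (h : IsI3MaxViolation A B ψ) (k : Fin 3) (s : Fin 3 → Fin 2) :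
    stabilizerOp A B k (multiPow B s ψ) = (-1 : ℂ) ^ (s k : ℕ) • multiPow B s ψ := by
  change A k (multiPow B _ (multiPow B s ψ)) = _
  rw [h.multiPow_apply_multiPow, h.A_multiPow, add_comm _ s, pi_fin_two_add_add_self,
    Pi.add_apply, single_add_one_apply_self, add_zero]

theorem orthonormal (h : IsI3MaxViolation A B ψ) : Orthonormal ℂ fun s => multiPow B s ψ := by
  rw [orthonormal_iff_ite]
  intro s r
  split_ifs with hsr
  · rw [hsr, h.multiPow_mem_innerPreserving r ψ ψ, inner_self_eq_norm_sq_to_K, h.norm_eq_one]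
    simp
  · obtain ⟨k, hk⟩ := Function.ne_iff.1 hsr
    refine inner_eq_zero_of_apply_eq_smul ?_ (h.stabilizerOp_multiPow k s)
      (h.stabilizerOp_multiPow k r) ?_
    · exact mul_mem (h.A_mem_innerPreserving k) (h.multiPow_mem_innerPreserving _)
    · exact neg_one_pow_val_mul_ne_one hk

lemma finrank_span (h : IsI3MaxViolation A B ψ) :
    Module.finrank ℂ (Submodule.span ℂ (Set.range fun s => multiPow B s ψ)) = 8 := by
  rw [finrank_span_eq_card h.orthonormal.linearIndependent]
  simp

lemma span_eq (h : IsI3MaxViolation A B ψ) :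
    Submodule.span ℂ ({ψ, A 0 ψ, A 1 ψ, A 2 ψ, B 0 ψ, B 1 ψ, B 2 ψ, A 0 (B 0 ψ)} : Set H) =
      Submodule.span ℂ (Set.range fun s => multiPow B s ψ) := by
  apply le_antisymm
  · have hu (s : Fin 3 → Fin 2) :
        multiPow B s ψ ∈ Submodule.span ℂ (Set.range fun s => multiPow B s ψ) :=
      Submodule.subset_span ⟨s, rfl⟩
    simp only [Submodule.span_le, Set.insert_subset_iff, Set.singleton_subset_iff, SetLike.mem_coe]
    refine ⟨by simpa using hu 0, h.A_state 0 ▸ hu _, h.A_state 1 ▸ hu _,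
      h.A_state 2 ▸ hu _, by simpa using hu (Pi.single 0 1), by simpa using hu (Pi.single 1 1),
      by simpa using hu (Pi.single 2 1), h.A_B_state 0 ▸ neg_mem (hu 1)⟩
  · have h₀ : B 1 (B 2 ψ) = A 0 ψ := by simpa [multiPow] using (h.A_state 0).symm
    have h₁ : B 0 (B 2 ψ) = A 1 ψ := by simpa [multiPow] using (h.A_state 1).symm
    have h₂ : B 0 (B 1 ψ) = A 2 ψ := by simpa [multiPow] using (h.A_state 2).symm
    have h₃ : B 0 (A 0 ψ) = -A 0 (B 0 ψ) := by
      rw [h.A_B_state 0, neg_neg]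
      simp [multiPow, h₀]
    rw [Submodule.span_le]
    rintro _ ⟨s, rfl⟩
    obtain ⟨a, b, c, rfl⟩ : ∃ a b c, s = ![a, b, c] :=
      ⟨s 0, s 1, s 2, by ext i; fin_cases i <;> rfl⟩
    fin_cases a <;> fin_cases b <;> fin_cases c <;> simp [multiPow, h₀, h₁, h₂, h₃] <;>
      exact Submodule.subset_span (by simp)

end IsI3MaxViolation

end MaxViolation

section Pauli

lemma tensorFactor_apply {n : ℕ} (M : Matrix (Fin 2) (Fin 2) ℂ) (i : Fin n)
    (f g : Fin n → Fin 2) :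
    tensorFactor n M i f g = if ∀ j, j ≠ i → f j = g j then M (f i) (g i) else 0 := by
  simp [tensorFactor, Finset.prod_boole]

lemma isHermitian_tensorFactor {n : ℕ} {M : Matrix (Fin 2) (Fin 2) ℂ} (hM : M.IsHermitian)
    (i : Fin n) : (tensorFactor n M i).IsHermitian := by
  ext f g
  have hfg : (∀ j, j ≠ i → g j = f j) ↔ ∀ j, j ≠ i → f j = g j :=
    forall₂_congr fun _ _ => eq_comm
  simp only [Matrix.conjTranspose_apply, tensorFactor_apply, hfg]
  split_ifs <;> simp [hM.apply]

lemma isHermitian_pauliX : PauliX.IsHermitian := by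
  ext a b; fin_cases a <;> fin_cases b <;> simp [PauliX]

lemma isHermitian_pauliZ : PauliZ.IsHermitian := by
  ext a b; fin_cases a <;> fin_cases b <;> simp [PauliZ]

lemma pauliX_apply (a b : Fin 2) : PauliX a b = if a = b + 1 then 1 else 0 := by
  fin_cases a <;> fin_cases b <;> simp [PauliX]

lemma pauliZ_apply (a b : Fin 2) : PauliZ a b = if a = b then (-1) ^ (b : ℕ) else 0 := by
  fin_cases a <;> fin_cases b <;> simp [PauliZ]

lemma Matrix.toEuclideanLin_single {ι : Type*} [Fintype ι] [DecidableEq ι] (M : Matrix ι ι ℂ)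
    (g : ι) : M.toEuclideanLin (EuclideanSpace.single g 1) = WithLp.toLp 2 fun f => M f g := by
  ext f
  simp [Matrix.mulVec_single]

lemma ContinuousLinearMap.ext_euclideanSpace_single {ι E : Type*} [Fintype ι] [DecidableEq ι]
    [NormedAddCommGroup E] [NormedSpace ℂ E] {f g : EuclideanSpace ℂ ι →L[ℂ] E}
    (h : ∀ x, f (EuclideanSpace.single x 1) = g (EuclideanSpace.single x 1)) : f = g :=
  ContinuousLinearMap.coe_injective <|
    (EuclideanSpace.basisFun ι ℂ).toBasis.ext fun x => by simpa using h x

noncomputable def qubitX (i : Fin 3) :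
    EuclideanSpace ℂ (Fin 3 → Fin 2) →L[ℂ] EuclideanSpace ℂ (Fin 3 → Fin 2) :=
  (Matrix.toEuclideanLin (tensorFactor 3 PauliX i)).toContinuousLinearMap

noncomputable def qubitZ (i : Fin 3) :
    EuclideanSpace ℂ (Fin 3 → Fin 2) →L[ℂ] EuclideanSpace ℂ (Fin 3 → Fin 2) :=
  (Matrix.toEuclideanLin (tensorFactor 3 PauliZ i)).toContinuousLinearMap

lemma qubitX_single (i : Fin 3) (g : Fin 3 → Fin 2) :
    qubitX i (EuclideanSpace.single g 1) = EuclideanSpace.single (g + Pi.single i 1) 1 := by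
  ext f
  have key : ((∀ j, j ≠ i → f j = g j) ∧ f i = g i + 1) ↔ f = g + Pi.single i 1 := by
    revert f g i; decide
  simp only [qubitX, LinearMap.coe_toContinuousLinearMap', Matrix.toEuclideanLin_single,
    tensorFactor_apply, pauliX_apply, ← ite_and, key, PiLp.single_apply]

lemma qubitZ_single (i : Fin 3) (g : Fin 3 → Fin 2) :
    qubitZ i (EuclideanSpace.single g 1) = (-1 : ℂ) ^ (g i : ℕ) • EuclideanSpace.single g 1 := by
  ext f
  have key : ((∀ j, j ≠ i → f j = g j) ∧ f i = g i) ↔ f = g := by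
    refine ⟨fun ⟨hne, hi⟩ => funext fun j => ?_, fun h => h ▸ ⟨fun _ _ => rfl, rfl⟩⟩
    by_cases hj : j = i
    · exact hj ▸ hi
    · exact hne j hj
  simp only [qubitZ, LinearMap.coe_toContinuousLinearMap', Matrix.toEuclideanLin_single,
    tensorFactor_apply, pauliZ_apply, ← ite_and, key, PiLp.single_apply, PiLp.smul_apply,
    smul_eq_mul, mul_ite, mul_one, mul_zero]

lemma qubitX_mul_self (i : Fin 3) : qubitX i * qubitX i = 1 :=
  ContinuousLinearMap.ext_euclideanSpace_single fun g => by
    simp [qubitX_single, pi_fin_two_add_add_self]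

lemma qubitZ_mul_self (i : Fin 3) : qubitZ i * qubitZ i = 1 :=
  ContinuousLinearMap.ext_euclideanSpace_single fun g => by
    simp [qubitZ_single, smul_smul, ← pow_add, ← two_mul, pow_mul]

lemma commute_qubitX (i j : Fin 3) : Commute (qubitX i) (qubitX j) :=
  ContinuousLinearMap.ext_euclideanSpace_single fun g => by
    simp [qubitX_single, add_right_comm]

lemma commute_qubitX_qubitZ {i j : Fin 3} (hij : i ≠ j) : Commute (qubitX i) (qubitZ j) :=
  ContinuousLinearMap.ext_euclideanSpace_single fun g => by
    simp [qubitX_single, qubitZ_single, Pi.single_eq_of_ne hij.symm]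

lemma commute_qubitZ (i j : Fin 3) : Commute (qubitZ i) (qubitZ j) :=
  ContinuousLinearMap.ext_euclideanSpace_single fun g => by
    simp [qubitZ_single, smul_smul, mul_comm]

lemma norm_graphState3 : ‖graphState3‖ = 1 := by
  have h8 : ((Real.sqrt 8 : ℂ))⁻¹ * (Real.sqrt 8 : ℂ)⁻¹ * 8 = 1 := by
    rw [← Complex.ofReal_inv, ← Complex.ofReal_mul, ← Complex.ofReal_ofNat, ← Complex.ofReal_mul]
    norm_num [← mul_inv]
  have h : ⟪graphState3, graphState3⟫_ℂ = 1 := by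
    rw [graphState3]
    simp only [inner_add_left, inner_add_right, inner_sub_left, inner_sub_right,
      inner_smul_left, inner_smul_right, EuclideanSpace.inner_single_left, PiLp.single_apply]
    simp +decide
    linear_combination h8
  rw [norm_eq_sqrt_re_inner (𝕜 := ℂ), h]
  simp

lemma pauli_relations :
    qubitX 0 (qubitZ 1 (qubitZ 2 graphState3)) = graphState3 ∧
    qubitZ 0 (qubitX 1 (qubitZ 2 graphState3)) = graphState3 ∧
    qubitZ 0 (qubitZ 1 (qubitX 2 graphState3)) = graphState3 ∧
    qubitX 0 (qubitX 1 (qubitX 2 graphState3)) = -graphState3 := by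
  have e₀ : (Pi.single 0 1 : Fin 3 → Fin 2) = ![1, 0, 0] := by decide
  have e₁ : (Pi.single 1 1 : Fin 3 → Fin 2) = ![0, 1, 0] := by decide
  have e₂ : (Pi.single 2 1 : Fin 3 → Fin 2) = ![0, 0, 1] := by decide
  refine ⟨?_, ?_, ?_, ?_⟩ <;>
  · simp only [graphState3, map_smul, map_add, map_sub, qubitX_single, qubitZ_single, e₀, e₁, e₂,
      Matrix.cons_add_cons, Matrix.empty_add_empty]
    simp +decide
    module

theorem isI3MaxViolation_pauli : IsI3MaxViolation qubitX qubitZ graphState3 where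
  inner_A_left i :=
    Matrix.isSymmetric_toEuclideanLin_iff.2 (isHermitian_tensorFactor isHermitian_pauliX i)
  inner_B_left i :=
    Matrix.isSymmetric_toEuclideanLin_iff.2 (isHermitian_tensorFactor isHermitian_pauliZ i)
  A_involutive i := DFunLike.congr_fun (qubitX_mul_self i)
  B_involutive i := DFunLike.congr_fun (qubitZ_mul_self i)
  A_comm i j _ := DFunLike.congr_fun (commute_qubitX i j).eq
  A_B_comm _ _ hij := DFunLike.congr_fun (commute_qubitX_qubitZ hij).eq
  B_comm i j _ := DFunLike.congr_fun (commute_qubitZ i j).eq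
  norm_eq_one := norm_graphState3
  A₀B₁B₂ := pauli_relations.1
  B₀A₁B₂ := pauli_relations.2.1
  B₀B₁A₂ := pauli_relations.2.2.1
  A₀A₁A₂ := pauli_relations.2.2.2

end Pauli

/-- under the maximal-violation hypotheses for `I₃` (setup as in
Statement 2), the subspace `V = span{ψ, A₁ψ, A₂ψ, A₃ψ, B₁ψ, B₂ψ, B₃ψ, A₁B₁ψ}`
has dimension `8` and there is a linear isometric equivalence
`e : V ≃ ℂ² ⊗ ℂ² ⊗ ℂ²` with `e(Aᵢ v) = Xᵢ e(v)`, `e(Bᵢ v) = Zᵢ e(v)` for all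
`v ∈ V`, and moreover `e(ψ) = |G'⟩`, the three-qubit complete-graph state. -/
theorem stmt8 {H : Type*} [NormedAddCommGroup H] [InnerProductSpace ℂ H]
    (A B : Fin 3 → H →L[ℂ] H)
    (hAsa : ∀ i (x y : H), (inner ℂ (A i x) y : ℂ) = inner ℂ x (A i y))
    (hBsa : ∀ i (x y : H), (inner ℂ (B i x) y : ℂ) = inner ℂ x (B i y))
    (hAinv : ∀ i (x : H), A i (A i x) = x)
    (hBinv : ∀ i (x : H), B i (B i x) = x)
    (hAA : ∀ i j, i ≠ j → ∀ x : H, A i (A j x) = A j (A i x))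
    (hAB : ∀ i j, i ≠ j → ∀ x : H, A i (B j x) = B j (A i x))
    (hBB : ∀ i j, i ≠ j → ∀ x : H, B i (B j x) = B j (B i x))
    (ψ : H) (hψ : ‖ψ‖ = 1)
    (h1 : A 0 (B 1 (B 2 ψ)) = ψ)
    (h2 : B 0 (A 1 (B 2 ψ)) = ψ)
    (h3 : B 0 (B 1 (A 2 ψ)) = ψ)
    (h4 : A 0 (A 1 (A 2 ψ)) = -ψ)
    (V : Submodule ℂ H)
    (hV : V = Submodule.span ℂ
      ({ψ, A 0 ψ, A 1 ψ, A 2 ψ, B 0 ψ, B 1 ψ, B 2 ψ, A 0 (B 0 ψ)} : Set H)) :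
    Module.finrank ℂ V = 8 ∧
    ∃ e : V ≃ₗᵢ[ℂ] EuclideanSpace ℂ (Fin 3 → Fin 2),
      (∀ (v : H) (hv : v ∈ V) (i : Fin 3) (hAv : A i v ∈ V) (hBv : B i v ∈ V),
        e ⟨A i v, hAv⟩ = Matrix.toEuclideanLin (tensorFactor 3 PauliX i) (e ⟨v, hv⟩) ∧
        e ⟨B i v, hBv⟩ = Matrix.toEuclideanLin (tensorFactor 3 PauliZ i) (e ⟨v, hv⟩)) ∧
      ∀ hψV : ψ ∈ V, e ⟨ψ, hψV⟩ = graphState3 := by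
  have h : IsI3MaxViolation A B ψ := ⟨hAsa, hBsa, hAinv, hBinv, hAA, hAB, hBB, hψ, h1, h2, h3, h4⟩
  have hK := isI3MaxViolation_pauli
  obtain rfl : V = Submodule.span ℂ (Set.range fun s => multiPow B s ψ) := hV.trans h.span_eq
  have htop : Submodule.span ℂ (Set.range fun s => multiPow qubitZ s graphState3) = ⊤ :=
    hK.orthonormal.linearIndependent.span_eq_top_of_card_eq_finrank' (by simp)
  refine ⟨h.finrank_span, (h.orthonormal.spanEquiv hK.orthonormal).trans
    (LinearIsometryEquiv.ofTop _ _ htop), fun v hv i hAv hBv => ⟨?_, ?_⟩, fun hψV => ?_⟩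
  · exact h.orthonormal.spanEquiv_apply_map hK.orthonormal (h.A_multiPow i) (hK.A_multiPow i)
      v hv hAv
  · exact h.orthonormal.spanEquiv_apply_map hK.orthonormal (c := 1)
      (fun s => (h.B_multiPow i s ψ).trans (one_smul ℂ _).symm)
      (fun s => (hK.B_multiPow i s _).trans (one_smul ℂ _).symm) v hv hBv
  · exact (h.orthonormal.spanEquiv_apply hK.orthonormal (s := 0) hψV (by simp)).trans (by simp)
end

section
/- Under these hypotheses, the subspace Vₙ = span{ (Π_{i∈S} Bᵢ) ψ : S ⊆ {1,…,n} } of H is invariant under the action of all 2n observables: Aᵢ(Vₙ) ⊆ Vₙ and Bⱼ(Vₙ) ⊆ Vₙ for all i, j ∈ {1,…,n}; moreover dim Vₙ ≤ 2ⁿ. -/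
/-!
Write `P_S = Π_{j ∈ S} Bⱼ` and `φ = P_univ ψ`. The `2ⁿ` spanning vectors `P_S ψ` are permuted
by the `Bⱼ`, since commuting involutions satisfy `P_S P_T = P_{S ∆ T}`. For the `Aᵢ`, note that
`Aᵢ` commutes with `P_S` when `i ∉ S`, and that the maximal-violation relations give
`Aᵢψ = Bᵢφ` and `AⱼBⱼψ = -φ`. The latter uses distinct `i, j, k`: the triple relation for
`{i, j, k}` combined with `AₖBₖφ = ψ` yields `AᵢBᵢ AⱼBⱼ ψ = -ψ`.
-/

/-- The product `Π_{i ∈ S} T i` of the operators `T i`, `i ∈ S`, multiplied in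
increasing order of the index; all products used below are over pairwise commuting
operators, so the order of the factors is irrelevant. -/
noncomputable def prodOver {H : Type*} [NormedAddCommGroup H] [InnerProductSpace ℂ H]
    {n : ℕ} (T : Fin n → H →L[ℂ] H) (S : Finset (Fin n)) : H →L[ℂ] H :=
  ((S.sort (· ≤ ·)).map T).prod

open Finset
open scoped symmDiff

section ProdOver

variable {H : Type*} [NormedAddCommGroup H] [InnerProductSpace ℂ H] {n : ℕ}
  {T : Fin n → H →L[ℂ] H}

lemma Commute.apply_apply_comm {a b : H →L[ℂ] H} (h : Commute a b) (x : H) :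
    a (b x) = b (a x) :=
  DFunLike.congr_fun h.eq x

lemma prodOver_eq_noncommProd (hT : Pairwise fun i j => Commute (T i) (T j))
    (S : Finset (Fin n)) : prodOver T S = S.noncommProd T (hT.set_pairwise _) := by
  simp only [prodOver, Finset.noncommProd, ← Finset.sort_eq S (· ≤ ·), Multiset.map_coe,
    Multiset.noncommProd_coe]

@[simp]
lemma prodOver_empty (T : Fin n → H →L[ℂ] H) : prodOver T ∅ = 1 := by
  simp [prodOver]

@[simp]
lemma prodOver_singleton (T : Fin n → H →L[ℂ] H) (i : Fin n) : prodOver T {i} = T i := by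
  simp [prodOver]

lemma prodOver_insert (hT : Pairwise fun i j => Commute (T i) (T j)) {i : Fin n}
    {S : Finset (Fin n)} (hi : i ∉ S) : prodOver T (insert i S) = T i * prodOver T S := by
  simp only [prodOver_eq_noncommProd hT, noncommProd_insert_of_notMem _ _ _ _ hi]

lemma prodOver_erase (hT : Pairwise fun i j => Commute (T i) (T j))
    (hT2 : ∀ i, T i * T i = 1) {i : Fin n} {S : Finset (Fin n)} (hi : i ∈ S) :
    prodOver T (S.erase i) = T i * prodOver T S := by
  rw [← insert_erase hi, prodOver_insert hT (notMem_erase i S), ← mul_assoc, hT2, one_mul,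
    erase_insert (notMem_erase i S)]

lemma Commute.prodOver_right (hT : Pairwise fun i j => Commute (T i) (T j))
    {C : H →L[ℂ] H} {S : Finset (Fin n)} (hC : ∀ j ∈ S, Commute C (T j)) :
    Commute C (prodOver T S) := by
  rw [prodOver_eq_noncommProd hT]
  exact noncommProd_commute _ _ _ _ hC

lemma prodOver_mul_prodOver (hT : Pairwise fun i j => Commute (T i) (T j))
    (hT2 : ∀ i, T i * T i = 1) (S S' : Finset (Fin n)) :
    prodOver T S * prodOver T S' = prodOver T (S ∆ S') := by
  induction S using Finset.induction with
  | empty => rw [prodOver_empty, one_mul, ← bot_eq_empty, bot_symmDiff]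
  | @insert i S hi ih =>
    rw [prodOver_insert hT hi, mul_assoc, ih]
    by_cases hmem : i ∈ S ∆ S'
    · have : insert i S ∆ S' = (S ∆ S').erase i := by
        ext j; by_cases hj : j = i <;> simp_all [mem_symmDiff]
      rw [this, prodOver_erase hT hT2 hmem]
    · have : insert i S ∆ S' = insert i (S ∆ S') := by
        ext j; by_cases hj : j = i <;> simp_all [mem_symmDiff]
      rw [this, prodOver_insert hT hmem]

/-- The subspace `Vₙ` of the paper. -/
def prodOverSpan (T : Fin n → H →L[ℂ] H) (ψ : H) : Submodule ℂ H :=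
  Submodule.span ℂ (Set.range fun S => prodOver T S ψ)

lemma prodOver_apply_mem_prodOverSpan (T : Fin n → H →L[ℂ] H) (ψ : H) (S : Finset (Fin n)) :
    prodOver T S ψ ∈ prodOverSpan T ψ :=
  Submodule.subset_span ⟨S, rfl⟩

lemma apply_mem_prodOverSpan {ψ : H} (L : H →L[ℂ] H)
    (hL : ∀ S, L (prodOver T S ψ) ∈ prodOverSpan T ψ) {v : H} (hv : v ∈ prodOverSpan T ψ) :
    L v ∈ prodOverSpan T ψ :=
  (Submodule.map_span_le (L : H →ₗ[ℂ] H) _ _).mpr (by simpa using hL)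
    (Submodule.mem_map_of_mem hv)

lemma prodOver_apply_mem_prodOverSpan_of_mem (hT : Pairwise fun i j => Commute (T i) (T j))
    (hT2 : ∀ i, T i * T i = 1) {ψ v : H} (S : Finset (Fin n)) (hv : v ∈ prodOverSpan T ψ) :
    prodOver T S v ∈ prodOverSpan T ψ := by
  refine apply_mem_prodOverSpan _ (fun S' => ?_) hv
  change (prodOver T S * prodOver T S') ψ ∈ _
  rw [prodOver_mul_prodOver hT hT2]
  exact prodOver_apply_mem_prodOverSpan T ψ _

end ProdOver

section MaximalViolation

variable {H : Type*} [NormedAddCommGroup H] [InnerProductSpace ℂ H] {n : ℕ}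
  {A B : Fin n → H →L[ℂ] H} {ψ : H}

/-- The relations of a maximal violation of `Iₙ` by `A`, `B`, `ψ`, in operator form. -/
structure IsMaximalViolation (A B : Fin n → H →L[ℂ] H) (ψ : H) : Prop where
  A_mul_self : ∀ i, A i * A i = 1
  B_mul_self : ∀ i, B i * B i = 1
  commute_A : Pairwise fun i j => Commute (A i) (A j)
  commute_A_B : Pairwise fun i j => Commute (A i) (B j)
  commute_B : Pairwise fun i j => Commute (B i) (B j)
  plus : ∀ i, A i (prodOver B (univ.erase i) ψ) = ψ
  minus : ∀ S : Finset (Fin n), S.card = 3 → prodOver A S (prodOver B Sᶜ ψ) = -ψ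

namespace IsMaximalViolation

lemma A_apply_A_apply (h : IsMaximalViolation A B ψ) (i : Fin n) (x : H) : A i (A i x) = x :=
  DFunLike.congr_fun (h.A_mul_self i) x

lemma B_apply_B_apply (h : IsMaximalViolation A B ψ) (i : Fin n) (x : H) : B i (B i x) = x :=
  DFunLike.congr_fun (h.B_mul_self i) x

lemma A_apply (h : IsMaximalViolation A B ψ) (i : Fin n) :
    A i ψ = prodOver B (univ.erase i) ψ := by
  conv_lhs => rw [← h.plus i]
  exact h.A_apply_A_apply i _

lemma A_apply_B_apply (h : IsMaximalViolation A B ψ) (hn : 3 ≤ n) (j : Fin n) :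
    A j (B j ψ) = -prodOver B univ ψ := by
  obtain ⟨i, hi, k, hk, hik⟩ := one_lt_card.mp <| show 1 < (univ.erase j).card by
    rw [card_erase_of_mem (mem_univ j), card_univ, Fintype.card_fin]; omega
  rw [mem_erase] at hi hk
  set R : Finset (Fin n) := {i, j, k}ᶜ
  have hiR : i ∉ R := by simp [R]
  have hjR : j ∉ R := by simp [R]
  have hplus_k : A k (B i (B j (prodOver B R ψ))) = ψ := by
    have hR : univ.erase k = insert i (insert j R) := by
      ext m; by_cases hm : m = k <;> simp [R, hm] <;> tauto
    have := h.plus k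
    rwa [hR, prodOver_insert h.commute_B (by simp [hiR, hi.1]),
      prodOver_insert h.commute_B hjR] at this
  have hminus_ijk : A i (A j (A k (prodOver B R ψ))) = -ψ := by
    have := h.minus {i, j, k} (card_eq_three.mpr ⟨i, j, k, hi.1, hik, hk.1.symm, rfl⟩)
    rwa [prodOver_insert h.commute_A (by simp [hi.1, hik]),
      prodOver_insert h.commute_A (by simpa using hk.1.symm), prodOver_singleton] at this
  have hBA_i : B i (A i ψ) = prodOver B univ ψ := by
    rw [h.A_apply, ← mul_apply_eq_comp, ← prodOver_insert h.commute_B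
      (notMem_erase i univ), insert_erase (mem_univ i)]
  have hABAB : A i (B i (A j (B j ψ))) = -ψ := calc
    A i (B i (A j (B j ψ))) = A i (B i (A j (B j (A k (B i (B j (prodOver B R ψ))))))) := by
      rw [hplus_k]
    _ = A i (B i (A j (B j (B i (B j (A k (prodOver B R ψ))))))) := by
      rw [(h.commute_A_B (Ne.symm hik)).apply_apply_comm,
        (h.commute_A_B hk.1).apply_apply_comm]
    _ = A i (B i (A j (B i (A k (prodOver B R ψ))))) := by
      rw [(h.commute_B (Ne.symm hi.1)).apply_apply_comm, h.B_apply_B_apply]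
    _ = A i (A j (A k (prodOver B R ψ))) := by
      rw [(h.commute_A_B (Ne.symm hi.1)).apply_apply_comm, h.B_apply_B_apply]
    _ = -ψ := hminus_ijk
  calc A j (B j ψ) = B i (A i (A i (B i (A j (B j ψ))))) := by
        rw [h.A_apply_A_apply, h.B_apply_B_apply]
    _ = -prodOver B univ ψ := by rw [hABAB, map_neg, map_neg, hBA_i]

lemma B_apply_mem_prodOverSpan (h : IsMaximalViolation A B ψ) (i : Fin n) {v : H}
    (hv : v ∈ prodOverSpan B ψ) : B i v ∈ prodOverSpan B ψ := by
  rw [← prodOver_singleton B i]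
  exact prodOver_apply_mem_prodOverSpan_of_mem h.commute_B h.B_mul_self _ hv

lemma A_apply_mem_prodOverSpan (h : IsMaximalViolation A B ψ) (hn : 3 ≤ n) (i : Fin n)
    {v : H} (hv : v ∈ prodOverSpan B ψ) : A i v ∈ prodOverSpan B ψ := by
  have hspan := prodOver_apply_mem_prodOverSpan B ψ
  have hprod (S : Finset (Fin n)) {w : H} (hw : w ∈ prodOverSpan B ψ) :
      prodOver B S w ∈ prodOverSpan B ψ :=
    prodOver_apply_mem_prodOverSpan_of_mem h.commute_B h.B_mul_self S hw
  have hcommA (S : Finset (Fin n)) (hi : i ∉ S) : Commute (A i) (prodOver B S) :=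
    Commute.prodOver_right h.commute_B fun j hj => h.commute_A_B (ne_of_mem_of_not_mem hj hi).symm
  have hcommB (S : Finset (Fin n)) (hi : i ∉ S) : Commute (B i) (prodOver B S) :=
    Commute.prodOver_right h.commute_B fun j hj => h.commute_B (ne_of_mem_of_not_mem hj hi).symm
  refine apply_mem_prodOverSpan _ (fun S => ?_) hv
  by_cases hi : i ∈ S
  · rw [← insert_erase hi, prodOver_insert h.commute_B (notMem_erase i S),
      mul_apply_eq_comp, (hcommB _ (notMem_erase i S)).apply_apply_comm,
      (hcommA _ (notMem_erase i S)).apply_apply_comm,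
      h.A_apply_B_apply hn, map_neg]
    exact neg_mem (hprod _ (hspan _))
  · rw [(hcommA S hi).apply_apply_comm, h.A_apply]
    exact hprod _ (hspan _)

end IsMaximalViolation

end MaximalViolation

theorem stmt10_general {H : Type*} [NormedAddCommGroup H] [InnerProductSpace ℂ H]
    (n : ℕ) (hn : 3 ≤ n)
    (A B : Fin n → H →L[ℂ] H)
    (hAinv : ∀ i (x : H), A i (A i x) = x)
    (hBinv : ∀ i (x : H), B i (B i x) = x)
    (hAA : ∀ i j, i ≠ j → ∀ x : H, A i (A j x) = A j (A i x))
    (hAB : ∀ i j, i ≠ j → ∀ x : H, A i (B j x) = B j (A i x))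
    (hBB : ∀ i j, i ≠ j → ∀ x : H, B i (B j x) = B j (B i x))
    (ψ : H)
    (hplus : ∀ i, A i (prodOver B (Finset.univ.erase i) ψ) = ψ)
    (hminus : ∀ S : Finset (Fin n), S.card = 3 →
      prodOver A S (prodOver B Sᶜ ψ) = -ψ)
    (V : Submodule ℂ H)
    (hV : V = Submodule.span ℂ {v : H | ∃ S : Finset (Fin n), v = prodOver B S ψ}) :
    (∀ v ∈ V, ∀ i, A i v ∈ V ∧ B i v ∈ V) ∧
    Module.finrank ℂ V ≤ 2 ^ n := by
  have h : IsMaximalViolation A B ψ :=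
    { A_mul_self := fun i => ContinuousLinearMap.ext (hAinv i)
      B_mul_self := fun i => ContinuousLinearMap.ext (hBinv i)
      commute_A := fun i j hij => ContinuousLinearMap.ext (hAA i j hij)
      commute_A_B := fun i j hij => ContinuousLinearMap.ext (hAB i j hij)
      commute_B := fun i j hij => ContinuousLinearMap.ext (hBB i j hij)
      plus := hplus
      minus := hminus }
  have hVspan : V = prodOverSpan B ψ := by
    rw [hV, prodOverSpan]
    congr 1
    ext v
    simp [eq_comm]
  subst hVspan
  refine ⟨fun v hv i => ⟨h.A_apply_mem_prodOverSpan hn i hv, h.B_apply_mem_prodOverSpan i hv⟩, ?_⟩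
  have := finrank_range_le_card (R := ℂ) fun S : Finset (Fin n) => prodOver B S ψ
  rwa [Fintype.card_finset, Fintype.card_fin] at this

/-- under the maximal-violation hypotheses for `Iₙ` (setup as in
Statement 9), the subspace `Vₙ = span{(Π_{i∈S} Bᵢ)ψ : S ⊆ {1,…,n}}` of `H` is
invariant under all `2n` observables (`Aᵢ(Vₙ) ⊆ Vₙ` and `Bⱼ(Vₙ) ⊆ Vₙ`), and
`dim Vₙ ≤ 2ⁿ`. -/
theorem stmt10 {H : Type*} [NormedAddCommGroup H] [InnerProductSpace ℂ H]
    (n : ℕ) (hn : 3 ≤ n)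
    (A B : Fin n → H →L[ℂ] H)
    (hAsa : ∀ i (x y : H), (inner ℂ (A i x) y : ℂ) = inner ℂ x (A i y))
    (hBsa : ∀ i (x y : H), (inner ℂ (B i x) y : ℂ) = inner ℂ x (B i y))
    (hAinv : ∀ i (x : H), A i (A i x) = x)
    (hBinv : ∀ i (x : H), B i (B i x) = x)
    (hAA : ∀ i j, i ≠ j → ∀ x : H, A i (A j x) = A j (A i x))
    (hAB : ∀ i j, i ≠ j → ∀ x : H, A i (B j x) = B j (A i x))
    (hBB : ∀ i j, i ≠ j → ∀ x : H, B i (B j x) = B j (B i x))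
    (ψ : H) (hψ : ‖ψ‖ = 1)
    (hplus : ∀ i, A i (prodOver B (Finset.univ.erase i) ψ) = ψ)
    (hminus : ∀ S : Finset (Fin n), S.card = 3 →
      prodOver A S (prodOver B Sᶜ ψ) = -ψ)
    (V : Submodule ℂ H)
    (hV : V = Submodule.span ℂ {v : H | ∃ S : Finset (Fin n), v = prodOver B S ψ}) :
    (∀ v ∈ V, ∀ i, A i v ∈ V ∧ B i v ∈ V) ∧
    Module.finrank ℂ V ≤ 2 ^ n :=
  stmt10_general n hn A B hAinv hBinv hAA hAB hBB ψ hplus hminus V hV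
end
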